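/- arXiv:1905.03618 — 2 statements merged into one kernel-verified Lean document; each statement's English description precedes it below -/
import Mathlib

section
/- For 0 < s < 1, a > 0, b > 0, and |x| < a, the following inequality holds: (I_a(a) - I_a(x)) / (a² - x²)^{(1-s)/2} ≤ B((1+s)/2, (1-s)/2) / (x² + b²)^{1 - s/2}, where I_a(x) = ∫_0^∞ u^{(1-s)/2} / ((u + a² + b²)^{1-s/2}(u + a² - x²)) du and B is the Beta function. Consequently the density σ'_a(x) defined as a positive multiple of (B((1+s)/2,(1-s)/2)/(x²+b²)^{1-s/2} − (I_a(a) − I_a(x))/(a² − x²)^{(1-s)/2}) is nonnegative on (−a, a). -/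
/-!
With `c = a² - x²`, the identity `1/u - 1/(u + c) = c / (u (u + c))` gives
`I_a(a) - I_a(x) = c ∫₀^∞ u^{p-1} / ((u + a² + b²)^q (u + c)) du` with `p = (1-s)/2`,
`q = 1 - s/2`. Bounding `(u + a² + b²)^q` below by `(x² + b²)^q` leaves the Stieltjes integral
`∫₀^∞ u^{p-1} / (u + c) du = c^{p-1} B(p, 1-p)`, which the substitution `u = c t / (1 - t)`
turns into Euler's Beta integral.
-/

open MeasureTheory Real Set Filter

noncomputable def eulerBeta (p q : ℝ) : ℝ :=
  Real.Gamma p * Real.Gamma q / Real.Gamma (p + q)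

noncomputable def Ia (s a b x : ℝ) : ℝ :=
  ∫ u in Ioi (0 : ℝ),
    u ^ ((1 - s) / 2) / ((u + a ^ 2 + b ^ 2) ^ (1 - s / 2) * (u + a ^ 2 - x ^ 2))

lemma eulerBeta_comm (p q : ℝ) : eulerBeta p q = eulerBeta q p := by
  rw [eulerBeta, eulerBeta, mul_comm, add_comm]

lemma integral_Ioo_rpow_mul_one_sub_rpow {p q : ℝ} (hp : 0 < p) (hq : 0 < q) :
    ∫ t in Ioo (0 : ℝ) 1, t ^ (p - 1) * (1 - t) ^ (q - 1) = eulerBeta p q := by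
  have hint := Complex.betaIntegral_convergent (u := p) (v := q) (by simpa) (by simpa)
  rw [intervalIntegrable_iff_integrableOn_Ioc_of_le zero_le_one, IntegrableOn] at hint
  rw [show eulerBeta p q = ProbabilityTheory.beta p q from rfl,
    ProbabilityTheory.beta_eq_betaIntegralReal p q hp hq, Complex.betaIntegral,
    intervalIntegral.integral_of_le zero_le_one, ← integral_Ioc_eq_integral_Ioo,
    ← RCLike.re_to_complex, ← integral_re hint]
  refine setIntegral_congr_fun measurableSet_Ioc fun t ⟨ht0, ht1⟩ ↦ ?_
  norm_cast
  rw [← Complex.ofReal_cpow ht0.le, ← Complex.ofReal_cpow (sub_nonneg.2 ht1),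
    RCLike.re_to_complex, ← Complex.ofReal_mul, Complex.ofReal_re]

lemma bijOn_mul_div_one_sub {c : ℝ} (hc : 0 < c) :
    BijOn (fun t ↦ c * t / (1 - t)) (Ioo 0 1) (Ioi 0) := by
  refine InvOn.bijOn (f' := fun u ↦ u / (u + c))
    ⟨fun t ⟨ht0, ht1⟩ ↦ ?_, fun u (hu : 0 < u) ↦ ?_⟩ (fun t ⟨ht0, ht1⟩ ↦ ?_)
    (fun u (hu : 0 < u) ↦ ⟨by positivity, ?_⟩)
  · have : 0 < 1 - t := by linarith
    field_simp
    ring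
  · have : 0 < u + c := by linarith
    simp only [one_sub_div this.ne', add_sub_cancel_left]
    field_simp
  · have : 0 < 1 - t := by linarith
    exact mem_Ioi.2 (by positivity)
  · rw [div_lt_one (by positivity)]
    linarith

lemma integrableOn_rpow_mul_add_rpow_neg {p q A : ℝ} (hp : 0 < p) (hpq : p < q) (hA : 0 < A) :
    IntegrableOn (fun u ↦ u ^ (p - 1) * (u + A) ^ (-q)) (Ioi 0) := by
  have hq : 0 ≤ q := by linarith
  refine mellin_convergent_of_isBigO_scalar (a := q) (b := 0) ?_ ?_ hpq ?_ hp
  · refine ContinuousOn.locallyIntegrableOn (fun u (hu : 0 < u) ↦ ?_) measurableSet_Ioi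
    exact ((continuous_add_const A).continuousAt.rpow_const
      (Or.inl (show u + A ≠ 0 by linarith))).continuousWithinAt
  · refine Asymptotics.IsBigO.of_bound 1 ?_
    filter_upwards [eventually_gt_atTop 0] with u hu
    rw [one_mul, norm_of_nonneg (by positivity), norm_of_nonneg (by positivity)]
    exact rpow_le_rpow_of_nonpos hu (by linarith) (by linarith)
  · refine Asymptotics.IsBigO.of_bound (A ^ (-q)) ?_
    filter_upwards [self_mem_nhdsWithin] with u (hu : 0 < u)
    rw [neg_zero, rpow_zero, norm_one, mul_one, norm_of_nonneg (by positivity)]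
    exact rpow_le_rpow_of_nonpos hA (by linarith) (by linarith)

lemma integral_Ioi_rpow_div_add {p c : ℝ} (hp : 0 < p) (hp1 : p < 1) (hc : 0 < c) :
    ∫ u in Ioi (0 : ℝ), u ^ (p - 1) / (u + c) = c ^ (p - 1) * eulerBeta p (1 - p) := by
  have hderiv : ∀ t ∈ Ioo (0 : ℝ) 1,
      HasDerivWithinAt (fun t ↦ c * t / (1 - t)) (c / (1 - t) ^ 2) (Ioo 0 1) t := by
    intro t ⟨_, ht1⟩
    have := ((hasDerivAt_id t).const_mul c).div ((hasDerivAt_id t).const_sub 1)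
      (show 1 - t ≠ 0 by linarith)
    refine (this.congr_deriv ?_).hasDerivWithinAt
    simp only [id, mul_one]
    ring
  have hbij := bijOn_mul_div_one_sub hc
  rw [← hbij.image_eq, integral_image_eq_integral_abs_deriv_smul measurableSet_Ioo hderiv
    hbij.injOn, ← integral_Ioo_rpow_mul_one_sub_rpow hp (by linarith), ← integral_const_mul]
  refine setIntegral_congr_fun measurableSet_Ioo fun t ⟨ht0, ht1⟩ ↦ ?_
  have hw : 0 < 1 - t := by linarith
  have hsum : c * t / (1 - t) + c = c / (1 - t) := by field_simp; ring
  have hinv : (1 - t) ^ (1 - p - 1) = ((1 - t) ^ (p - 1))⁻¹ / (1 - t) := by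
    rw [rpow_sub_one hw.ne', ← rpow_neg hw.le, neg_sub]
  have : 0 < (1 - t) ^ (p - 1) := by positivity
  rw [smul_eq_mul, abs_of_pos (by positivity), hsum, hinv, div_rpow (by positivity) hw.le,
    mul_rpow hc.le ht0.le]
  field_simp

lemma rpow_div_sub_rpow_div_le {p q A D c u : ℝ} (hu : 0 < u) (hc : 0 ≤ c) (hD : 0 < D)
    (hDA : D ≤ A) (hq : 0 ≤ q) :
    u ^ p / ((u + A) ^ q * u) - u ^ p / ((u + A) ^ q * (u + c)) ≤
      c * (u ^ (p - 1) / (u + c)) / D ^ q := by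
  have : 0 < u + A := by linarith
  calc _ = c * (u ^ (p - 1) / (u + c)) / (u + A) ^ q := by
        rw [rpow_sub_one hu.ne']
        field_simp
        ring
    _ ≤ _ := by gcongr; linarith

theorem integral_rpow_div_sub_integral_le {p q A D c : ℝ} (hp : 0 < p) (hp1 : p < 1)
    (hpq : p < q) (hc : 0 < c) (hD : 0 < D) (hDA : D ≤ A) :
    (∫ u in Ioi (0 : ℝ), u ^ p / ((u + A) ^ q * u)) -
        ∫ u in Ioi (0 : ℝ), u ^ p / ((u + A) ^ q * (u + c)) ≤
      c ^ p * eulerBeta p (1 - p) / D ^ q := by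
  have hA : 0 < A := hD.trans_le hDA
  have hint₀ : IntegrableOn (fun u ↦ u ^ p / ((u + A) ^ q * u)) (Ioi 0) := by
    refine (integrableOn_rpow_mul_add_rpow_neg hp hpq hA).congr_fun (fun u (hu : 0 < u) ↦ ?_)
      measurableSet_Ioi
    dsimp only
    rw [rpow_sub_one hu.ne', rpow_neg (by linarith)]
    field_simp
  have hintc : IntegrableOn (fun u ↦ u ^ p / ((u + A) ^ q * (u + c))) (Ioi 0) := by
    refine hint₀.mono' (Measurable.aestronglyMeasurable (by fun_prop))
      ((ae_restrict_iff' measurableSet_Ioi).2 (ae_of_all _ fun u (hu : 0 < u) ↦ ?_))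
    rw [norm_of_nonneg (by positivity)]
    gcongr
    linarith
  have hintg : IntegrableOn (fun u ↦ c * (u ^ (p - 1) / (u + c)) / D ^ q) (Ioi 0) := by
    refine ((integrableOn_rpow_mul_add_rpow_neg hp hp1 hc).congr_fun (fun u _ ↦ ?_)
      measurableSet_Ioi).const_mul c |>.div_const _
    rw [rpow_neg_one, div_eq_mul_inv]
  calc _ = ∫ u in Ioi (0 : ℝ), (u ^ p / ((u + A) ^ q * u) - u ^ p / ((u + A) ^ q * (u + c))) :=
        (integral_sub hint₀ hintc).symm
    _ ≤ ∫ u in Ioi (0 : ℝ), c * (u ^ (p - 1) / (u + c)) / D ^ q :=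
        setIntegral_mono_on (hint₀.sub hintc) hintg measurableSet_Ioi
          fun u hu ↦ rpow_div_sub_rpow_div_le hu hc.le hD hDA (by linarith)
    _ = c ^ p * eulerBeta p (1 - p) / D ^ q := by
        rw [integral_div, integral_const_mul, integral_Ioi_rpow_div_add hp hp1 hc,
          rpow_sub_one hc.ne']
        field_simp

theorem sigma_density_nonneg_general (s a b x : ℝ) (hs0 : 0 < s) (hs1 : s < 1)
    (hb : 0 < b) (hx : |x| < a) :
    (Ia s a b a - Ia s a b x) / (a ^ 2 - x ^ 2) ^ ((1 - s) / 2) ≤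
      eulerBeta ((1 + s) / 2) ((1 - s) / 2) / (x ^ 2 + b ^ 2) ^ (1 - s / 2) := by
  have hxa : x ^ 2 < a ^ 2 := sq_lt_sq' (abs_lt.1 hx).1 (abs_lt.1 hx).2
  have hIa : ∀ y, Ia s a b y = ∫ u in Ioi (0 : ℝ),
      u ^ ((1 - s) / 2) / ((u + (a ^ 2 + b ^ 2)) ^ (1 - s / 2) * (u + (a ^ 2 - y ^ 2))) :=
    fun y ↦ by simp only [Ia, add_assoc, add_sub_assoc]
  have key := integral_rpow_div_sub_integral_le (p := (1 - s) / 2) (q := 1 - s / 2)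
    (A := a ^ 2 + b ^ 2) (D := x ^ 2 + b ^ 2) (c := a ^ 2 - x ^ 2)
    (by linarith) (by linarith) (by linarith) (by linarith) (by positivity) (by linarith)
  rw [show 1 - (1 - s) / 2 = (1 + s) / 2 by ring, eulerBeta_comm] at key
  simp only [hIa, sub_self, add_zero]
  rw [div_le_iff₀ (rpow_pos_of_pos (by linarith) _)]
  exact key.trans_eq (by ring)

/-- The key inequality showing the measure `σ_a` is positive. -/
theorem sigma_density_nonneg (s a b x : ℝ) (hs0 : 0 < s) (hs1 : s < 1)
    (ha : 0 < a) (hb : 0 < b) (hx : |x| < a) :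
    (Ia s a b a - Ia s a b x) / (a ^ 2 - x ^ 2) ^ ((1 - s) / 2) ≤
      eulerBeta ((1 + s) / 2) ((1 - s) / 2) / (x ^ 2 + b ^ 2) ^ (1 - s / 2) :=
  sigma_density_nonneg_general s a b x hs0 hs1 hb hx
end

section
/- For 0 < s < 1, a > 0, b > 0, let I_a(x) = ∫_0^∞ u^{(1-s)/2}/((u + a² + b²)^{1-s/2}(u + a² − x²)) du. Then lim_{x → a⁻} (I_a(a) − I_a(x)) / (a² − x²)^{(1-s)/2} = B((1+s)/2, (1-s)/2) / (a² + b²)^{1 − s/2}. Consequently the density σ'_a(x), proportional to B((1+s)/2,(1-s)/2)/(x²+b²)^{1-s/2} − (I_a(a)−I_a(x))/(a²−x²)^{(1-s)/2}, tends to 0 as x → a⁻. -/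
open MeasureTheory Real Set Filter

section Aux

lemma beta_integrable {p q : ℝ} (hp : 0 < p) (hq : 0 < q) :
    IntegrableOn (fun t => t ^ (p-1) * (1-t) ^ (q-1)) (Ioo (0:ℝ) 1) := by
  have h := (Complex.betaIntegral_convergent (u := p) (v := q) (by simpa) (by simpa)).norm
  have h2 : IntegrableOn (fun x : ℝ => ‖(x:ℂ) ^ ((p:ℂ) - 1) * (1 - (x:ℂ)) ^ ((q:ℂ) - 1)‖)
      (Ioo (0:ℝ) 1) :=
    ((intervalIntegrable_iff_integrableOn_Ioc_of_le zero_le_one).mp h).mono_set Ioo_subset_Ioc_self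
  refine h2.congr_fun (fun x hx => ?_) measurableSet_Ioo
  obtain ⟨hx0, hx1⟩ := hx
  beta_reduce
  rw [norm_mul]
  rw [show (1 : ℂ) - (x:ℂ) = ((1 - x : ℝ) : ℂ) by push_cast; ring]
  rw [show ((p:ℂ) - 1) = ((p - 1 : ℝ) : ℂ) by push_cast; ring,
    show ((q:ℂ) - 1) = ((q - 1 : ℝ) : ℂ) by push_cast; ring]
  rw [Complex.norm_cpow_eq_rpow_re_of_pos hx0, Complex.norm_cpow_eq_rpow_re_of_pos (by linarith)]
  simp

lemma beta_value {p q : ℝ} (hp : 0 < p) (hq : 0 < q) :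
    ∫ t in Ioo (0:ℝ) 1, t ^ (p-1) * (1-t) ^ (q-1) =
      Real.Gamma p * Real.Gamma q / Real.Gamma (p+q) := by
  have key : ((∫ t in Ioo (0:ℝ) 1, t ^ (p-1) * (1-t) ^ (q-1) : ℝ) : ℂ)
      = Complex.betaIntegral p q := by
    rw [Complex.betaIntegral]
    rw [← integral_Ioc_eq_integral_Ioo, ← intervalIntegral.integral_of_le zero_le_one,
      ← intervalIntegral.integral_ofReal]
    refine intervalIntegral.integral_congr (fun x hx => ?_)
    rw [uIcc_of_le zero_le_one] at hx
    obtain ⟨hx0, hx1⟩ := hx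
    rw [Complex.ofReal_mul, Complex.ofReal_cpow hx0, Complex.ofReal_cpow (by linarith : (0:ℝ) ≤ 1 - x)]
    push_cast
    ring
  have hG : Complex.Gamma (p + q) ≠ 0 := by
    rw [show ((p:ℂ) + q) = ((p + q : ℝ) : ℂ) by push_cast; ring, Complex.Gamma_ofReal]
    exact_mod_cast (Real.Gamma_pos_of_pos (by linarith)).ne'
  have h := Complex.Gamma_mul_Gamma_eq_betaIntegral (s := p) (t := q) (by simpa) (by simpa)
  rw [← key] at h
  have : ((Real.Gamma p * Real.Gamma q / Real.Gamma (p+q) : ℝ) : ℂ)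
      = ((∫ t in Ioo (0:ℝ) 1, t ^ (p-1) * (1-t) ^ (q-1) : ℝ) : ℂ) := by
    push_cast
    rw [← Complex.Gamma_ofReal, ← Complex.Gamma_ofReal, ← Complex.Gamma_ofReal]
    push_cast
    rw [div_eq_iff hG, h]
    ring
  exact_mod_cast this.symm

section cov
variable (g : ℝ → ℝ)

lemma cov_deriv : ∀ t ∈ Ioo (0:ℝ) 1, HasDerivWithinAt (fun t => t / (1 - t))
    (((1-t)^2)⁻¹) (Ioo (0:ℝ) 1) t := by
  intro t ht
  have h1 : (1:ℝ) - t ≠ 0 := by have := ht.2; intro h; nlinarith [ht.2]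
  have : HasDerivAt (fun t : ℝ => t / (1 - t))
      ((1 * (1 - t) - t * (0 - 1)) / (1 - t)^2) t :=
    (hasDerivAt_id t).div ((hasDerivAt_const t 1).sub (hasDerivAt_id t)) h1
  have h2 : (1 * (1 - t) - t * (0 - 1)) / (1 - t)^2 = ((1-t)^2)⁻¹ := by
    field_simp
    ring
  rw [h2] at this
  exact this.hasDerivWithinAt

lemma cov_inj : InjOn (fun t => t / (1 - t)) (Ioo (0:ℝ) 1) := by
  intro t1 h1 t2 h2 h
  simp only at h
  have d1 : (1:ℝ) - t1 ≠ 0 := by intro hc; nlinarith [h1.2]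
  have d2 : (1:ℝ) - t2 ≠ 0 := by intro hc; nlinarith [h2.2]
  field_simp at h
  nlinarith [h]

lemma cov_image : (fun t => t / (1 - t)) '' (Ioo (0:ℝ) 1) = Ioi (0:ℝ) := by
  ext v
  constructor
  · rintro ⟨t, ht, rfl⟩
    exact div_pos ht.1 (by linarith [ht.2])
  · intro hv
    refine ⟨v / (1 + v), ⟨div_pos hv (by linarith [mem_Ioi.mp hv]), ?_⟩, ?_⟩
    · rw [div_lt_one (by linarith [mem_Ioi.mp hv])]; linarith [mem_Ioi.mp hv]
    · have h1 : (1:ℝ) + v ≠ 0 := by have := mem_Ioi.mp hv; positivity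
      field_simp
      ring

lemma cov_integral :
    ∫ v in Ioi (0:ℝ), g v = ∫ t in Ioo (0:ℝ) 1, |((1-t)^2)⁻¹| * g (t / (1 - t)) := by
  rw [← cov_image, integral_image_eq_integral_abs_deriv_smul measurableSet_Ioo cov_deriv cov_inj]
  simp [smul_eq_mul]

lemma cov_integrable :
    IntegrableOn g (Ioi (0:ℝ)) ↔
      IntegrableOn (fun t => |((1-t)^2)⁻¹| * g (t / (1 - t))) (Ioo (0:ℝ) 1) := by
  rw [← cov_image,
    integrableOn_image_iff_integrableOn_abs_deriv_smul measurableSet_Ioo cov_deriv cov_inj]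
  simp [smul_eq_mul]

end cov

lemma intOn_split {f : ℝ → ℝ} (h1 : IntegrableOn f (Ioc 0 1)) (h2 : IntegrableOn f (Ioi 1)) :
    IntegrableOn f (Ioi (0:ℝ)) := by
  rw [show Ioi (0:ℝ) = Ioc 0 1 ∪ Ioi 1 from (Ioc_union_Ioi_eq_Ioi zero_le_one).symm]
  exact h1.union h2

lemma int_x {r c A ε : ℝ} (hr : 0 ≤ r) (hrc : r < c) (hA : 0 < A) (hε : 0 < ε) :
    IntegrableOn (fun u => u ^ r / ((u + A) ^ c * (u + ε))) (Ioi (0:ℝ)) := by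
  have hc : 0 < c := lt_of_le_of_lt hr hrc
  have mble : ∀ S : Set ℝ, AEStronglyMeasurable (fun u : ℝ => u ^ r / ((u + A) ^ c * (u + ε)))
      (volume.restrict S) := fun S => (by fun_prop : Measurable _).aestronglyMeasurable
  apply intOn_split
  · refine Integrable.mono' (g := fun _ => 1 / (A ^ c * ε))
      (integrableOn_const measure_Ioc_lt_top.ne) (mble _) ?_
    filter_upwards [ae_restrict_mem measurableSet_Ioc] with u hu
    obtain ⟨hu0, hu1⟩ := hu
    have h1 : (0:ℝ) ≤ u ^ r / ((u + A) ^ c * (u + ε)) := by positivity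
    rw [Real.norm_eq_abs, abs_of_nonneg h1]
    apply div_le_div₀ (by positivity) _ (by positivity) _
    · calc u ^ r ≤ 1 ^ r := Real.rpow_le_rpow hu0.le hu1 hr
        _ = 1 := Real.one_rpow r
    · have := Real.rpow_le_rpow hA.le (by linarith : A ≤ u + A) hc.le
      nlinarith [Real.rpow_pos_of_pos hA c, this]
  · refine Integrable.mono' (g := fun u => u ^ (r - c - 1))
      (integrableOn_Ioi_rpow_of_lt (by linarith) one_pos) (mble _) ?_
    filter_upwards [ae_restrict_mem measurableSet_Ioi] with u hu
    have hu1 : (1:ℝ) < u := hu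
    have hu0 : (0:ℝ) < u := by linarith
    have h1 : (0:ℝ) ≤ u ^ r / ((u + A) ^ c * (u + ε)) := by positivity
    rw [Real.norm_eq_abs, abs_of_nonneg h1]
    have key : u ^ (r - c - 1) = u ^ r / (u ^ c * u) := by
      rw [Real.rpow_sub hu0, Real.rpow_sub hu0, Real.rpow_one, div_div]
    rw [key]
    apply div_le_div₀ (by positivity) le_rfl (by positivity)
    have h2 : u ^ c ≤ (u + A) ^ c := Real.rpow_le_rpow hu0.le (by linarith) hc.le
    nlinarith [Real.rpow_pos_of_pos hu0 c]

lemma int_a {r c A : ℝ} (hr : 0 < r) (hrc : r < c) (hA : 0 < A) :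
    IntegrableOn (fun u => u ^ r / ((u + A) ^ c * u)) (Ioi (0:ℝ)) := by
  have hc : 0 < c := lt_of_lt_of_le hr hrc.le
  have mble : ∀ S : Set ℝ, AEStronglyMeasurable (fun u : ℝ => u ^ r / ((u + A) ^ c * u))
      (volume.restrict S) := fun S => (by fun_prop : Measurable _).aestronglyMeasurable
  apply intOn_split
  · have base : IntegrableOn (fun u : ℝ => u ^ (r - 1)) (Ioc (0:ℝ) 1) :=
      (intervalIntegrable_iff_integrableOn_Ioc_of_le zero_le_one).mp
        (intervalIntegral.intervalIntegrable_rpow' (by linarith))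
    refine Integrable.mono' (g := fun u => (A ^ c)⁻¹ * u ^ (r - 1))
      (base.const_mul _) (mble _) ?_
    filter_upwards [ae_restrict_mem measurableSet_Ioc] with u hu
    obtain ⟨hu0, hu1⟩ := hu
    have h1 : (0:ℝ) ≤ u ^ r / ((u + A) ^ c * u) := by positivity
    rw [Real.norm_eq_abs, abs_of_nonneg h1]
    have key : (A ^ c)⁻¹ * u ^ (r - 1) = u ^ r / (A ^ c * u) := by
      rw [Real.rpow_sub hu0, Real.rpow_one]
      field_simp
    rw [key]
    apply div_le_div₀ (by positivity) le_rfl (by positivity)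
    have h2 : A ^ c ≤ (u + A) ^ c := Real.rpow_le_rpow hA.le (by linarith) hc.le
    nlinarith
  · refine Integrable.mono' (g := fun u => u ^ (r - c - 1))
      (integrableOn_Ioi_rpow_of_lt (by linarith) one_pos) (mble _) ?_
    filter_upwards [ae_restrict_mem measurableSet_Ioi] with u hu
    have hu1 : (1:ℝ) < u := hu
    have hu0 : (0:ℝ) < u := by linarith
    have h1 : (0:ℝ) ≤ u ^ r / ((u + A) ^ c * u) := by positivity
    rw [Real.norm_eq_abs, abs_of_nonneg h1]
    have key : u ^ (r - c - 1) = u ^ r / (u ^ c * u) := by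
      rw [Real.rpow_sub hu0, Real.rpow_sub hu0, Real.rpow_one, div_div]
    rw [key]
    apply div_le_div₀ (by positivity) le_rfl (by positivity)
    have h2 : u ^ c ≤ (u + A) ^ c := Real.rpow_le_rpow hu0.le (by linarith) hc.le
    nlinarith [Real.rpow_pos_of_pos hu0 c]

lemma frac_pointwise {p : ℝ} {t : ℝ} (ht : t ∈ Ioo (0:ℝ) 1) :
    |((1-t)^2)⁻¹| * ((t / (1-t)) ^ (p-1) / (1 + t / (1-t)))
      = t ^ (p-1) * (1-t) ^ ((1-p)-1) := by
  obtain ⟨ht0, ht1⟩ := ht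
  have hu : (0:ℝ) < 1 - t := by linarith
  have h1t : (1:ℝ) + t / (1-t) = (1-t)⁻¹ := by field_simp; ring
  rw [h1t, Real.div_rpow ht0.le hu.le, abs_of_pos (by positivity)]
  have h2 : (1-t) ^ ((1-p)-1) = ((1-t) ^ (p-1) * (1-t)^(2:ℕ) * (1-t)⁻¹)⁻¹ := by
    rw [← Real.rpow_natCast (1-t) 2, ← Real.rpow_neg_one (1-t),
      ← Real.rpow_add hu, ← Real.rpow_add hu, ← Real.rpow_neg hu.le]
    norm_num
    ring_nf
  rw [h2]
  have hne1 : (1-t) ^ (p-1) ≠ 0 := (Real.rpow_pos_of_pos hu _).ne'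
  field_simp

lemma frac_integrable {p : ℝ} (hp : 0 < p) (hp1 : p < 1) :
    IntegrableOn (fun v => v ^ (p-1) / (1 + v)) (Ioi (0:ℝ)) := by
  rw [cov_integrable]
  exact ((beta_integrable hp (by linarith : (0:ℝ) < 1 - p)).congr_fun
    (fun t ht => (frac_pointwise ht).symm) measurableSet_Ioo)

lemma frac_value {p : ℝ} (hp : 0 < p) (hp1 : p < 1) :
    ∫ v in Ioi (0:ℝ), v ^ (p-1) / (1 + v) = Real.Gamma p * Real.Gamma (1-p) := by
  rw [cov_integral, setIntegral_congr_fun measurableSet_Ioo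
    (fun t ht => frac_pointwise ht), beta_value hp (by linarith),
    show p + (1-p) = 1 by ring, Real.Gamma_one, div_one]

lemma G_integrable {p c A ε : ℝ} (hp : 0 < p) (hp1 : p < 1) (hc : 0 < c) (hA : 0 < A)
    (hε : 0 ≤ ε) :
    IntegrableOn (fun v => v ^ (p-1) / ((1 + v) * (ε * v + A) ^ c)) (Ioi (0:ℝ)) := by
  refine Integrable.mono' (g := fun v => (A ^ c)⁻¹ * (v ^ (p-1) / (1 + v)))
    ((frac_integrable hp hp1).const_mul _)
    ((by fun_prop : Measurable fun v : ℝ => v ^ (p-1) / ((1 + v) * (ε * v + A) ^ c)).aestronglyMeasurable) ?_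
  filter_upwards [ae_restrict_mem measurableSet_Ioi] with v hv
  have hv0 : (0:ℝ) < v := hv
  have h1 : (0:ℝ) ≤ v ^ (p-1) / ((1 + v) * (ε * v + A) ^ c) := by positivity
  rw [Real.norm_eq_abs, abs_of_nonneg h1]
  have key : (A ^ c)⁻¹ * (v ^ (p-1) / (1 + v)) = v ^ (p-1) / ((1 + v) * A ^ c) := by
    simp only [div_eq_mul_inv, mul_inv]
    ring
  rw [key]
  apply div_le_div₀ (by positivity) le_rfl (by positivity)
  have h2 : A ^ c ≤ (ε * v + A) ^ c := Real.rpow_le_rpow hA.le (by nlinarith) hc.le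
  nlinarith [Real.rpow_pos_of_pos hA c]

lemma G0_value {p c A : ℝ} (hp : 0 < p) (hp1 : p < 1) (hc : 0 < c) (hA : 0 < A) :
    ∫ v in Ioi (0:ℝ), v ^ (p-1) / ((1 + v) * A ^ c)
      = Real.Gamma p * Real.Gamma (1-p) / A ^ c := by
  have : ∀ v : ℝ, v ^ (p-1) / ((1 + v) * A ^ c) = v ^ (p-1) / (1 + v) * (A ^ c)⁻¹ := by
    intro v; field_simp
  simp_rw [this]
  rw [integral_mul_const, frac_value hp hp1, div_eq_mul_inv]

lemma Ia_diff {s A ε : ℝ} (hs0 : 0 < s) (hs1 : s < 1) (hA : 0 < A) (hε : 0 < ε) :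
    (∫ u in Ioi (0:ℝ), u ^ ((1-s)/2) / ((u + A) ^ (1 - s/2) * u)) -
      (∫ u in Ioi (0:ℝ), u ^ ((1-s)/2) / ((u + A) ^ (1 - s/2) * (u + ε))) =
    ε ^ ((1-s)/2) *
      ∫ v in Ioi (0:ℝ), v ^ ((1-s)/2 - 1) / ((1 + v) * (ε * v + A) ^ (1 - s/2)) := by
  set r : ℝ := (1-s)/2 with hr_def
  set c : ℝ := 1 - s/2 with hc_def
  have hr : 0 < r := by rw [hr_def]; linarith
  have hrc : r < c := by rw [hr_def, hc_def]; linarith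
  rw [← integral_sub (int_a hr hrc hA) (int_x hr.le hrc hA hε)]
  have sub_eq : ∀ u ∈ Ioi (0:ℝ),
      u ^ r / ((u + A) ^ c * u) - u ^ r / ((u + A) ^ c * (u + ε))
        = ε * (u ^ (r-1) / ((u + A) ^ c * (u + ε))) := by
    intro u hu
    have hu0 : (0:ℝ) < u := hu
    have h1 : u ^ (r-1) = u ^ r / u := by rw [Real.rpow_sub hu0, Real.rpow_one]
    have h2 : ((u + A) ^ c) ≠ 0 := by positivity
    rw [h1]
    field_simp
    ring
  rw [setIntegral_congr_fun measurableSet_Ioi sub_eq, integral_const_mul]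
  have cov := integral_comp_mul_left_Ioi
    (fun u => u ^ (r-1) / ((u + A) ^ c * (u + ε))) 0 hε
  rw [mul_zero] at cov
  have cov' : (∫ u in Ioi (0:ℝ), u ^ (r-1) / ((u + A) ^ c * (u + ε)))
      = ε * ∫ v in Ioi (0:ℝ), (ε * v) ^ (r-1) / ((ε * v + A) ^ c * (ε * v + ε)) := by
    rw [cov, smul_eq_mul, ← mul_assoc, mul_inv_cancel₀ hε.ne', one_mul]
  rw [cov']
  have ptw : ∀ v ∈ Ioi (0:ℝ),
      (ε * v) ^ (r-1) / ((ε * v + A) ^ c * (ε * v + ε))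
        = ε ^ (r-2) * (v ^ (r-1) / ((1 + v) * (ε * v + A) ^ c)) := by
    intro v hv
    have hv0 : (0:ℝ) < v := hv
    rw [Real.mul_rpow hε.le hv0.le]
    have h1 : ε * v + ε = ε * (1 + v) := by ring
    have h2 : ε ^ (r-2) = ε ^ (r-1) / ε := by
      rw [eq_div_iff hε.ne', ← Real.rpow_add_one hε.ne']
      congr 1
      ring
    rw [h1, h2]
    have h3 : ((ε * v + A) ^ c) ≠ 0 := by positivity
    have h4 : (0:ℝ) < 1 + v := by linarith
    field_simp
  rw [setIntegral_congr_fun measurableSet_Ioi ptw, integral_const_mul]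
  have hpow : ε * (ε * ε ^ (r-2)) = ε ^ r := by
    have h5 : ε ^ r = ε ^ (r-2) * ε ^ (2:ℕ) := by
      rw [← Real.rpow_natCast ε 2, ← Real.rpow_add hε]
      norm_num
    rw [h5]; ring
  rw [← mul_assoc, ← mul_assoc, ← hpow]
  ring

end Aux

/-- `lim_{x → a⁻} (I_a(a) − I_a(x))/(a²−x²)^((1-s)/2) = B((1+s)/2,(1-s)/2)/(a²+b²)^{1-s/2}`,
so the density of `σ_a` tends to `0` at the endpoint. -/
theorem sigma_density_vanishes_at_endpoint (s a b : ℝ) (hs0 : 0 < s) (hs1 : s < 1)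
    (ha : 0 < a) (hb : 0 < b) :
    Tendsto (fun x : ℝ => (Ia s a b a - Ia s a b x) / (a ^ 2 - x ^ 2) ^ ((1 - s) / 2))
      (nhdsWithin a (Iio a))
      (nhds (eulerBeta ((1 + s) / 2) ((1 - s) / 2) / (a ^ 2 + b ^ 2) ^ (1 - s / 2))) ∧
    Tendsto (fun x : ℝ =>
        eulerBeta ((1 + s) / 2) ((1 - s) / 2) / (x ^ 2 + b ^ 2) ^ (1 - s / 2) -
          (Ia s a b a - Ia s a b x) / (a ^ 2 - x ^ 2) ^ ((1 - s) / 2))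
      (nhdsWithin a (Iio a)) (nhds 0) := by
  set p : ℝ := (1 - s) / 2 with hp_def
  set c : ℝ := 1 - s / 2 with hc_def
  set A : ℝ := a ^ 2 + b ^ 2 with hA_def
  have hp0 : 0 < p := by rw [hp_def]; linarith
  have hp1 : p < 1 := by rw [hp_def]; linarith
  have hc : 0 < c := by rw [hc_def]; linarith
  have hA : 0 < A := by positivity
  have hBeta : eulerBeta ((1 + s) / 2) ((1 - s) / 2)
      = Real.Gamma p * Real.Gamma (1 - p) := by
    rw [eulerBeta, show (1 + s)/2 + (1 - s)/2 = 1 by ring, Real.Gamma_one, div_one,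
      show (1 + s)/2 = 1 - p by rw [hp_def]; ring, mul_comm]
  have hmem : Ioo 0 a ∈ nhdsWithin a (Iio a) :=
    Ioo_mem_nhdsLT_of_mem ⟨ha, le_rfl⟩
  -- the key eventual identity
  have hident : ∀ᶠ x in nhdsWithin a (Iio a),
      (Ia s a b a - Ia s a b x) / (a ^ 2 - x ^ 2) ^ p
        = ∫ v in Ioi (0:ℝ), v ^ (p - 1) / ((1 + v) * ((a^2 - x^2) * v + A) ^ c) := by
    filter_upwards [hmem] with x hx
    obtain ⟨hx0, hxa⟩ := hx
    have hε : (0:ℝ) < a ^ 2 - x ^ 2 := by nlinarith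
    have E1 : Ia s a b a = ∫ u in Ioi (0:ℝ), u ^ p / ((u + A) ^ c * u) := by
      rw [Ia]
      simp only [show ∀ u : ℝ, u + a ^ 2 + b ^ 2 = u + A from fun u => by rw [hA_def]; ring,
        show ∀ u : ℝ, u + a ^ 2 - a ^ 2 = u from fun u => by ring]
      rfl
    have E2 : Ia s a b x
        = ∫ u in Ioi (0:ℝ), u ^ p / ((u + A) ^ c * (u + (a^2 - x^2))) := by
      rw [Ia]
      simp only [show ∀ u : ℝ, u + a ^ 2 + b ^ 2 = u + A from fun u => by rw [hA_def]; ring,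
        show ∀ u : ℝ, u + a ^ 2 - x ^ 2 = u + (a^2 - x^2) from fun u => by ring]
      rfl
    rw [E1, E2, Ia_diff hs0 hs1 hA hε, ← hp_def, ← hc_def]
    rw [mul_comm, mul_div_assoc, div_self (by positivity : ((a^2 - x^2) ^ p) ≠ 0), mul_one]
  -- dominated convergence
  have hlim : Tendsto
      (fun x : ℝ => ∫ v in Ioi (0:ℝ), v ^ (p - 1) / ((1 + v) * ((a^2 - x^2) * v + A) ^ c))
      (nhdsWithin a (Iio a))
      (nhds (∫ v in Ioi (0:ℝ), v ^ (p - 1) / ((1 + v) * A ^ c))) := by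
    apply tendsto_integral_filter_of_dominated_convergence
      (bound := fun v => v ^ (p - 1) / ((1 + v) * A ^ c))
    · filter_upwards with x
      exact (by fun_prop :
        Measurable fun v : ℝ => v ^ (p-1) / ((1 + v) * ((a^2 - x^2) * v + A) ^ c)).aestronglyMeasurable
    · filter_upwards [hmem] with x hx
      filter_upwards [ae_restrict_mem measurableSet_Ioi] with v hv
      have hv0 : (0:ℝ) < v := hv
      have hε : (0:ℝ) < a ^ 2 - x ^ 2 := by nlinarith [hx.1, hx.2]
      have h1 : (0:ℝ) ≤ v ^ (p-1) / ((1 + v) * ((a^2 - x^2) * v + A) ^ c) := by positivity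
      rw [Real.norm_eq_abs, abs_of_nonneg h1]
      apply div_le_div₀ (by positivity) le_rfl (by positivity)
      have h2 : A ^ c ≤ ((a^2 - x^2) * v + A) ^ c :=
        Real.rpow_le_rpow hA.le (by nlinarith) hc.le
      nlinarith [Real.rpow_pos_of_pos hA c]
    · exact (G_integrable hp0 hp1 hc hA le_rfl).congr_fun
        (fun v hv => by norm_num) measurableSet_Ioi
    · filter_upwards [ae_restrict_mem measurableSet_Ioi] with v hv
      have hv0 : (0:ℝ) < v := hv
      have hc1 : ContinuousAt (fun x : ℝ => ((a^2 - x^2) * v + A) ^ c) a := by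
        apply ContinuousAt.rpow_const (by fun_prop) (Or.inr hc.le)
      have hc2 : ContinuousAt
          (fun x : ℝ => v ^ (p-1) / ((1 + v) * ((a^2 - x^2) * v + A) ^ c)) a := by
        apply ContinuousAt.div continuousAt_const (continuousAt_const.mul hc1)
        have : ((a^2 - a^2) * v + A) = A := by ring
        show (1 + v) * ((a^2 - a^2) * v + A) ^ c ≠ 0
        rw [this]
        positivity
      have := (hc2.tendsto).mono_left (nhdsWithin_le_nhds (s := Iio a))
      convert this using 2
      norm_num
  have h1 : Tendsto (fun x : ℝ => (Ia s a b a - Ia s a b x) / (a ^ 2 - x ^ 2) ^ p)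
      (nhdsWithin a (Iio a))
      (nhds (eulerBeta ((1 + s) / 2) ((1 - s) / 2) / A ^ c)) := by
    rw [show eulerBeta ((1 + s) / 2) ((1 - s) / 2) / A ^ c
        = ∫ v in Ioi (0:ℝ), v ^ (p - 1) / ((1 + v) * A ^ c) by
      rw [G0_value hp0 hp1 hc hA, hBeta]]
    exact Tendsto.congr' (Filter.EventuallyEq.symm hident) hlim
  refine ⟨h1, ?_⟩
  have h2 : Tendsto (fun x : ℝ => eulerBeta ((1 + s) / 2) ((1 - s) / 2) / (x^2 + b^2) ^ c)
      (nhdsWithin a (Iio a))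
      (nhds (eulerBeta ((1 + s) / 2) ((1 - s) / 2) / A ^ c)) := by
    have hca : ContinuousAt (fun x : ℝ => eulerBeta ((1 + s) / 2) ((1 - s) / 2) / (x^2 + b^2) ^ c) a := by
      apply ContinuousAt.div continuousAt_const
        (ContinuousAt.rpow_const (by fun_prop) (Or.inr hc.le))
      positivity
    exact hca.tendsto.mono_left nhdsWithin_le_nhds
  have := h2.sub h1
  rwa [sub_self] at this
end
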